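/- In the saddle-point setting with inexact preconditioning, where M_U = [[F, Bᵀ],[0, H2]], M̃_U = [[P₁, Bᵀ],[0, H2]], P₁ ∈ ℝ^{n×n} is nonsingular, ‖P₁⁻¹F − I‖_{H1} ≤ C₃η, and H = blockdiag(H1, H2), one has ‖M̃_U⁻¹K‖_H ≤ (1 + C₃η) ‖M_U⁻¹K‖_H. -/

import Mathlib

open Matrix

/-- The `H`-norm of a vector: `‖u‖_H = (uᵀ H u)^{1/2}`. -/
noncomputable def vnorm {α : Type*} [Fintype α] (H : Matrix α α ℝ) (u : α → ℝ) : ℝ :=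
  Real.sqrt (u ⬝ᵥ (H *ᵥ u))

/-- The weighted operator norm `‖M‖_{H1,H2} = sup_{v ≠ 0} ‖M v‖_{H2} / ‖v‖_{H1}`.
For a square matrix, `‖M‖_H = wnorm H H M`; the spectral norm is `wnorm 1 1 M`. -/
noncomputable def wnorm {α β : Type*} [Fintype α] [Fintype β]
    (H1 : Matrix α α ℝ) (H2 : Matrix β β ℝ) (M : Matrix β α ℝ) : ℝ :=
  sSup {r : ℝ | ∃ v : α → ℝ, v ≠ 0 ∧ r = vnorm H2 (M *ᵥ v) / vnorm H1 v}

/-!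
Since `P₁ P₁⁻¹ F = F`, the two preconditioners differ by a block-diagonal factor:
`M̃_U⁻¹ K = blockdiag(P₁⁻¹ F, I) · M_U⁻¹ K` (here `F` is invertible because its symmetric part is
positive definite, so `M_U` is invertible). Because `H` is block diagonal, the `H`-norm of
`blockdiag(A, D)` is at most `max (‖A‖_{H1}, ‖D‖_{H2})`, and
`‖P₁⁻¹ F‖_{H1} ≤ ‖P₁⁻¹ F - I‖_{H1} + ‖I‖_{H1} ≤ 1 + C₃ η`. Submultiplicativity of the weighted
operator norm finishes the proof; all norm estimates reduce to Euclidean ones via `u ↦ H^{1/2} u`.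
-/

open scoped MatrixOrder

section WeightedNorms

variable {α β γ : Type*} [Fintype α] [Fintype β] [Fintype γ]

lemma vnorm_sq {H : Matrix α α ℝ} (hH : H.PosSemidef) (u : α → ℝ) :
    vnorm H u ^ 2 = u ⬝ᵥ H *ᵥ u :=
  Real.sq_sqrt (by simpa using hH.dotProduct_mulVec_nonneg u)

lemma norm_toLp_two_eq_sqrt_dotProduct (w : α → ℝ) :
    ‖WithLp.toLp 2 w‖ = Real.sqrt (w ⬝ᵥ w) := by
  rw [EuclideanSpace.norm_eq]
  congr 1
  exact Finset.sum_congr rfl fun i _ => by simp [sq]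

lemma vnorm_eq_norm_sqrt_mulVec [DecidableEq α] {H : Matrix α α ℝ} (hH : H.PosSemidef)
    (u : α → ℝ) : vnorm H u = ‖WithLp.toLp 2 (CFC.sqrt H *ᵥ u)‖ := by
  have hsymm : (CFC.sqrt H)ᵀ = CFC.sqrt H := by
    simpa [Matrix.IsHermitian] using (CFC.sqrt_nonneg H).posSemidef.isHermitian
  rw [norm_toLp_two_eq_sqrt_dotProduct, vnorm]
  conv_lhs => rw [← CFC.sqrt_mul_sqrt_self H hH.nonneg]
  rw [← mulVec_mulVec, dotProduct_mulVec, ← mulVec_transpose, hsymm]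

lemma vnorm_add_le {H : Matrix α α ℝ} (hH : H.PosSemidef) (u v : α → ℝ) :
    vnorm H (u + v) ≤ vnorm H u + vnorm H v := by
  classical
  simp only [vnorm_eq_norm_sqrt_mulVec hH, mulVec_add, WithLp.toLp_add]
  exact norm_add_le _ _

lemma vnorm_fromBlocks_sumElim {H1 : Matrix α α ℝ} {H2 : Matrix β β ℝ}
    (h1 : H1.PosSemidef) (h2 : H2.PosSemidef) (x : α → ℝ) (y : β → ℝ) :
    vnorm (fromBlocks H1 0 0 H2) (Sum.elim x y) = Real.sqrt (vnorm H1 x ^ 2 + vnorm H2 y ^ 2) := by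
  rw [vnorm, vnorm_sq h1, vnorm_sq h2, fromBlocks_mulVec, sumElim_dotProduct_sumElim]
  simp

lemma Matrix.PosDef.fromBlocks_zero {H1 : Matrix α α ℝ} {H2 : Matrix β β ℝ}
    (h1 : H1.PosDef) (h2 : H2.PosDef) : (fromBlocks H1 0 0 H2).PosDef := by
  refine .of_dotProduct_mulVec_pos (h1.isHermitian.fromBlocks (by simp) h2.isHermitian)
    fun v hv => ?_
  obtain ⟨x, y, rfl⟩ : ∃ x y, v = Sum.elim x y := ⟨_, _, (Sum.elim_comp_inl_inr v).symm⟩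
  have hxy : x ≠ 0 ∨ y ≠ 0 := by
    by_contra! h
    exact hv (by rw [h.1, h.2]; ext (i | j) <;> rfl)
  have px := h1.posSemidef.dotProduct_mulVec_nonneg x
  have py := h2.posSemidef.dotProduct_mulVec_nonneg y
  simp only [star_trivial] at px py ⊢
  rw [fromBlocks_mulVec, sumElim_dotProduct_sumElim]
  simp only [Sum.elim_comp_inl, Sum.elim_comp_inr, zero_mulVec, add_zero, zero_add]
  rcases hxy with hx | hy
  · have := h1.dotProduct_mulVec_pos hx
    simp only [star_trivial] at this
    linarith
  · have := h2.dotProduct_mulVec_pos hy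
    simp only [star_trivial] at this
    linarith

lemma exists_vnorm_mulVec_le {H1 : Matrix α α ℝ} {H2 : Matrix β β ℝ} (h1 : H1.PosDef)
    (h2 : H2.PosSemidef) (M : Matrix β α ℝ) :
    ∃ C, ∀ v, vnorm H2 (M *ᵥ v) ≤ C * vnorm H1 v := by
  classical
  set S1 := CFC.sqrt H1
  set S2 := CFC.sqrt H2
  have hS1 : IsUnit S1.det := (Matrix.isUnit_iff_isUnit_det S1).mp
    (CStarAlgebra.isStrictlyPositive_iff_isUnit_sqrt_and_eq_sqrt_mul_sqrt.mp
      h1.isStrictlyPositive).1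
  -- `H2^{1/2} M v = (H2^{1/2} M H1^{-1/2}) (H1^{1/2} v)`: bound by the Euclidean operator norm.
  let T := LinearMap.toContinuousLinearMap (Matrix.toEuclideanLin (S2 * M * S1⁻¹))
  refine ⟨‖T‖, fun v => ?_⟩
  have hconj : S2 *ᵥ (M *ᵥ v) = (S2 * M * S1⁻¹) *ᵥ (S1 *ᵥ v) := by
    rw [mulVec_mulVec, mulVec_mulVec, Matrix.mul_assoc (S2 * M), nonsing_inv_mul _ hS1,
      Matrix.mul_one]
  rw [vnorm_eq_norm_sqrt_mulVec h2, vnorm_eq_norm_sqrt_mulVec h1.posSemidef, hconj]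
  exact T.le_opNorm (WithLp.toLp 2 (S1 *ᵥ v))

lemma wnorm_nonneg (H1 : Matrix α α ℝ) (H2 : Matrix β β ℝ) (M : Matrix β α ℝ) :
    0 ≤ wnorm H1 H2 M :=
  Real.sSup_nonneg fun _ ⟨_, _, hr⟩ => hr ▸ div_nonneg (Real.sqrt_nonneg _) (Real.sqrt_nonneg _)

lemma wnorm_le_of_forall_vnorm_mulVec_le {H1 : Matrix α α ℝ} {H2 : Matrix β β ℝ}
    {M : Matrix β α ℝ} {c : ℝ} (hc : 0 ≤ c) (h : ∀ v, vnorm H2 (M *ᵥ v) ≤ c * vnorm H1 v) :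
    wnorm H1 H2 M ≤ c :=
  Real.sSup_le (fun _ ⟨v, _, hr⟩ => hr ▸ div_le_of_le_mul₀ (Real.sqrt_nonneg _) hc (h v)) hc

lemma vnorm_mulVec_le_wnorm_mul {H1 : Matrix α α ℝ} {H2 : Matrix β β ℝ} (h1 : H1.PosDef)
    (h2 : H2.PosSemidef) (M : Matrix β α ℝ) (v : α → ℝ) :
    vnorm H2 (M *ᵥ v) ≤ wnorm H1 H2 M * vnorm H1 v := by
  obtain ⟨C, hC⟩ := exists_vnorm_mulVec_le h1 h2 M
  rcases eq_or_ne v 0 with rfl | hv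
  · simp [vnorm]
  have hpos : 0 < vnorm H1 v := Real.sqrt_pos.mpr (by simpa using h1.dotProduct_mulVec_pos hv)
  have hbdd : BddAbove {r : ℝ | ∃ v : α → ℝ, v ≠ 0 ∧ r = vnorm H2 (M *ᵥ v) / vnorm H1 v} := by
    refine ⟨max C 0, fun _ ⟨w, _, hr⟩ => hr ▸ div_le_of_le_mul₀ (Real.sqrt_nonneg _)
      (le_max_right _ _) ((hC w).trans ?_)⟩
    exact mul_le_mul_of_nonneg_right (le_max_left _ _) (Real.sqrt_nonneg _)
  rw [← div_le_iff₀ hpos]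
  exact le_csSup hbdd ⟨v, hv, rfl⟩

lemma wnorm_mul_le {H1 : Matrix α α ℝ} {H2 : Matrix β β ℝ} {H3 : Matrix γ γ ℝ}
    (h1 : H1.PosDef) (h2 : H2.PosDef) (h3 : H3.PosSemidef) (A : Matrix γ β ℝ)
    (M : Matrix β α ℝ) : wnorm H1 H3 (A * M) ≤ wnorm H2 H3 A * wnorm H1 H2 M :=
  wnorm_le_of_forall_vnorm_mulVec_le
    (mul_nonneg (wnorm_nonneg _ _ _) (wnorm_nonneg _ _ _)) fun v =>
    calc vnorm H3 ((A * M) *ᵥ v) = vnorm H3 (A *ᵥ (M *ᵥ v)) := by rw [mulVec_mulVec]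
      _ ≤ wnorm H2 H3 A * vnorm H2 (M *ᵥ v) := vnorm_mulVec_le_wnorm_mul h2 h3 A _
      _ ≤ wnorm H2 H3 A * (wnorm H1 H2 M * vnorm H1 v) := by
        gcongr
        · exact wnorm_nonneg _ _ _
        · exact vnorm_mulVec_le_wnorm_mul h1 h2.posSemidef M v
      _ = _ := by ring

lemma wnorm_add_le {H1 : Matrix α α ℝ} {H2 : Matrix β β ℝ} (h1 : H1.PosDef)
    (h2 : H2.PosSemidef) (A B : Matrix β α ℝ) :
    wnorm H1 H2 (A + B) ≤ wnorm H1 H2 A + wnorm H1 H2 B :=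
  wnorm_le_of_forall_vnorm_mulVec_le
    (add_nonneg (wnorm_nonneg _ _ _) (wnorm_nonneg _ _ _)) fun v =>
    calc vnorm H2 ((A + B) *ᵥ v) ≤ vnorm H2 (A *ᵥ v) + vnorm H2 (B *ᵥ v) := by
          rw [add_mulVec]; exact vnorm_add_le h2 _ _
      _ ≤ wnorm H1 H2 A * vnorm H1 v + wnorm H1 H2 B * vnorm H1 v :=
          add_le_add (vnorm_mulVec_le_wnorm_mul h1 h2 A v) (vnorm_mulVec_le_wnorm_mul h1 h2 B v)
      _ = _ := by ring

lemma wnorm_one_le [DecidableEq α] (H : Matrix α α ℝ) : wnorm H H 1 ≤ 1 :=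
  Real.sSup_le (fun _ ⟨_, _, hr⟩ => hr ▸ by simpa using div_self_le_one _) zero_le_one

lemma wnorm_le_one_add_wnorm_sub_one [DecidableEq α] {H : Matrix α α ℝ} (hH : H.PosDef)
    (A : Matrix α α ℝ) : wnorm H H A ≤ 1 + wnorm H H (A - 1) :=
  calc wnorm H H A = wnorm H H ((A - 1) + 1) := by rw [sub_add_cancel]
    _ ≤ wnorm H H (A - 1) + wnorm H H 1 := wnorm_add_le hH hH.posSemidef _ _
    _ ≤ 1 + wnorm H H (A - 1) := by linarith [wnorm_one_le H]

lemma wnorm_fromBlocks_zero_le {δ : Type*} [Fintype δ] {G1 : Matrix α α ℝ} {G2 : Matrix β β ℝ}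
    {H1 : Matrix γ γ ℝ} {H2 : Matrix δ δ ℝ} (hG1 : G1.PosDef) (hG2 : G2.PosDef)
    (hH1 : H1.PosSemidef) (hH2 : H2.PosSemidef) (A : Matrix γ α ℝ) (D : Matrix δ β ℝ) :
    wnorm (fromBlocks G1 0 0 G2) (fromBlocks H1 0 0 H2) (fromBlocks A 0 0 D) ≤
      max (wnorm G1 H1 A) (wnorm G2 H2 D) := by
  set c := max (wnorm G1 H1 A) (wnorm G2 H2 D)
  have hc : 0 ≤ c := (wnorm_nonneg _ _ _).trans (le_max_left _ _)
  refine wnorm_le_of_forall_vnorm_mulVec_le hc fun v => ?_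
  obtain ⟨x, y, rfl⟩ : ∃ x y, v = Sum.elim x y := ⟨_, _, (Sum.elim_comp_inl_inr v).symm⟩
  have hAx : vnorm H1 (A *ᵥ x) ≤ c * vnorm G1 x :=
    (vnorm_mulVec_le_wnorm_mul hG1 hH1 A x).trans
      (mul_le_mul_of_nonneg_right (le_max_left _ _) (Real.sqrt_nonneg _))
  have hDy : vnorm H2 (D *ᵥ y) ≤ c * vnorm G2 y :=
    (vnorm_mulVec_le_wnorm_mul hG2 hH2 D y).trans
      (mul_le_mul_of_nonneg_right (le_max_right _ _) (Real.sqrt_nonneg _))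
  have hblock : fromBlocks A 0 0 D *ᵥ Sum.elim x y = Sum.elim (A *ᵥ x) (D *ᵥ y) := by
    simp [fromBlocks_mulVec]
  rw [hblock, vnorm_fromBlocks_sumElim hH1 hH2, vnorm_fromBlocks_sumElim hG1.posSemidef
    hG2.posSemidef, ← Real.sqrt_sq hc, ← Real.sqrt_mul (sq_nonneg c)]
  gcongr
  calc vnorm H1 (A *ᵥ x) ^ 2 + vnorm H2 (D *ᵥ y) ^ 2
      ≤ (c * vnorm G1 x) ^ 2 + (c * vnorm G2 y) ^ 2 := by
        gcongr <;> exact Real.sqrt_nonneg _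
    _ = c ^ 2 * (vnorm G1 x ^ 2 + vnorm G2 y ^ 2) := by ring

end WeightedNorms

section SaddlePoint

variable {α β : Type*} [Fintype α] [Fintype β]

lemma dotProduct_mulVec_symmPart (F : Matrix α α ℝ) (x : α → ℝ) :
    x ⬝ᵥ ((1 / 2 : ℝ) • (F + Fᵀ)) *ᵥ x = x ⬝ᵥ F *ᵥ x := by
  have htranspose : x ⬝ᵥ Fᵀ *ᵥ x = x ⬝ᵥ F *ᵥ x := by
    rw [mulVec_transpose, dotProduct_comm, ← dotProduct_mulVec]
  rw [smul_mulVec, dotProduct_smul, add_mulVec, dotProduct_add, htranspose, smul_eq_mul]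
  ring

lemma isUnit_det_of_forall_dotProduct_mulVec_pos [DecidableEq α] {F : Matrix α α ℝ}
    (hF : ∀ x ≠ 0, 0 < x ⬝ᵥ F *ᵥ x) : IsUnit F.det := by
  refine isUnit_iff_ne_zero.mpr fun hdet => ?_
  obtain ⟨x, hx, hFx⟩ := exists_mulVec_eq_zero_iff.mpr hdet
  simpa [hFx] using hF x hx

lemma inv_fromBlocks_zero₂₁_mul_fromBlocks_zero₂₁ [DecidableEq α] [DecidableEq β] {R : Type*} [CommRing R]
    {P : Matrix α α R} {D : Matrix β β R} (F : Matrix α α R) (C : Matrix α β R)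
    (hP : IsUnit P.det) (hD : IsUnit D.det) :
    (fromBlocks P C 0 D)⁻¹ * fromBlocks F C 0 D = fromBlocks (P⁻¹ * F) 0 0 1 := by
  have hfactor : fromBlocks P C 0 D * fromBlocks (P⁻¹ * F) 0 0 1 = fromBlocks F C 0 D := by
    simp [fromBlocks_multiply, mul_nonsing_inv_cancel_left _ _ hP]
  rw [← hfactor, nonsing_inv_mul_cancel_left _ _ (by simpa [det_fromBlocks_zero₂₁] using hP.mul hD)]

end SaddlePoint

theorem stmt_15_general
    {n m : ℕ} (F : Matrix (Fin n) (Fin n) ℝ) (B : Matrix (Fin m) (Fin n) ℝ)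
    (H1 : Matrix (Fin n) (Fin n) ℝ) (H2 : Matrix (Fin m) (Fin m) ℝ)
    (hH1 : H1 = ((1 : ℝ)/2) • (F + Fᵀ))
    (hH1pd : H1.PosDef) (hH2pd : H2.PosDef)
    (η C₃ : ℝ)
    (P₁ : Matrix (Fin n) (Fin n) ℝ) (hP₁ : IsUnit P₁.det)
    (hP1F : wnorm H1 H1 (P₁⁻¹ * F - 1) ≤ C₃ * η)
    (K MU MUt H : Matrix (Fin n ⊕ Fin m) (Fin n ⊕ Fin m) ℝ)
    (hK : K = fromBlocks F Bᵀ B 0)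
    (hMU : MU = fromBlocks F Bᵀ 0 H2)
    (hMUt : MUt = fromBlocks P₁ Bᵀ 0 H2)
    (hH : H = fromBlocks H1 0 0 H2) :
    wnorm H H (MUt⁻¹ * K) ≤ (1 + C₃ * η) * wnorm H H (MU⁻¹ * K) := by
  subst hK hMU hMUt hH
  have hHpd := hH1pd.fromBlocks_zero hH2pd
  have hF : IsUnit F.det := isUnit_det_of_forall_dotProduct_mulVec_pos fun x hx => by
    simpa only [star_trivial, hH1, dotProduct_mulVec_symmPart] using hH1pd.dotProduct_mulVec_pos hx
  have hH2 : IsUnit H2.det := isUnit_iff_ne_zero.mpr hH2pd.det_pos.ne'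
  have hMU : IsUnit (fromBlocks F Bᵀ 0 H2).det := by
    simpa [det_fromBlocks_zero₂₁] using hF.mul hH2
  have hfactor : (fromBlocks P₁ Bᵀ 0 H2)⁻¹ * fromBlocks F Bᵀ B 0 =
      fromBlocks (P₁⁻¹ * F) 0 0 1 * ((fromBlocks F Bᵀ 0 H2)⁻¹ * fromBlocks F Bᵀ B 0) := by
    rw [← inv_fromBlocks_zero₂₁_mul_fromBlocks_zero₂₁ F Bᵀ hP₁ hH2, Matrix.mul_assoc,
      mul_nonsing_inv_cancel_left _ _ hMU]
  have hCη : 0 ≤ C₃ * η := (wnorm_nonneg _ _ _).trans hP1F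
  have hP₁F : wnorm H1 H1 (P₁⁻¹ * F) ≤ 1 + C₃ * η :=
    (wnorm_le_one_add_wnorm_sub_one hH1pd _).trans (by linarith)
  have hblock : wnorm (fromBlocks H1 0 0 H2) (fromBlocks H1 0 0 H2)
      (fromBlocks (P₁⁻¹ * F) 0 0 1) ≤ 1 + C₃ * η :=
    (wnorm_fromBlocks_zero_le hH1pd hH2pd hH1pd.posSemidef hH2pd.posSemidef _ _).trans
      (max_le hP₁F (by linarith [wnorm_one_le H2]))
  rw [hfactor]
  exact (wnorm_mul_le hHpd hHpd hHpd.posSemidef _ _).trans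
    (mul_le_mul_of_nonneg_right hblock (wnorm_nonneg _ _ _))

theorem stmt_15
    {n m : ℕ} (F : Matrix (Fin n) (Fin n) ℝ) (B : Matrix (Fin m) (Fin n) ℝ)
    (H1 N : Matrix (Fin n) (Fin n) ℝ) (H2 : Matrix (Fin m) (Fin m) ℝ)
    (hH1 : H1 = ((1 : ℝ)/2) • (F + Fᵀ)) (hN : N = ((1 : ℝ)/2) • (F - Fᵀ))
    (hH1pd : H1.PosDef) (hH2pd : H2.PosDef)
    (hBrank : B.rank = m)
    (η C₃ : ℝ) (hη : 0 < η) (hC3 : 0 < C₃)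
    (P₁ : Matrix (Fin n) (Fin n) ℝ) (hP₁ : IsUnit P₁.det)
    (hP1F : wnorm H1 H1 (P₁⁻¹ * F - 1) ≤ C₃ * η)
    (K MU MUt H : Matrix (Fin n ⊕ Fin m) (Fin n ⊕ Fin m) ℝ)
    (hK : K = fromBlocks F Bᵀ B 0)
    (hMU : MU = fromBlocks F Bᵀ 0 H2)
    (hMUt : MUt = fromBlocks P₁ Bᵀ 0 H2)
    (hH : H = fromBlocks H1 0 0 H2) :
    wnorm H H (MUt⁻¹ * K) ≤ (1 + C₃ * η) * wnorm H H (MU⁻¹ * K) :=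
  stmt_15_general F B H1 H2 hH1 hH1pd hH2pd η C₃ P₁ hP₁ hP1F K MU MUt H hK hMU hMUt hH
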